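/- For γ > 0 and S, I, D, σ² > 0 with γ = S/(I + D + σ²), the fractional programming identity holds: log(1 + γ) = max over μ ≥ 0 of [log(1+μ) − μ + (1+μ)S/(S + I + D + σ²)], with the maximum attained at μ* = γ. -/

import Mathlib

/-! The bound `fpDual γ μ ≤ log (1 + γ)` is `log x ≤ x - 1` at `x = (1 + μ) / (1 + γ)`,
with equality exactly at `x = 1`, i.e. `μ = γ`. The SINDR enters only through
`S / (S + I + D + σ²) = γ / (1 + γ)`. -/

open Real

/-- The Lagrangian dual objective of `log (1 + γ)` in the auxiliary variable `μ`. -/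
noncomputable def fpDual (γ μ : ℝ) : ℝ :=
  log (1 + μ) - μ + (1 + μ) * (γ / (1 + γ))

theorem fpDual_self {γ : ℝ} (hγ : 1 + γ ≠ 0) : fpDual γ γ = log (1 + γ) := by
  rw [fpDual, mul_div_cancel₀ _ hγ]
  ring

theorem fpDual_le {γ μ : ℝ} (hγ : -1 < γ) (hμ : -1 < μ) : fpDual γ μ ≤ log (1 + γ) := by
  have h1γ : 0 < 1 + γ := by linarith
  have h1μ : 0 < 1 + μ := by linarith
  have hlog := log_le_sub_one_of_pos (div_pos h1μ h1γ)
  rw [log_div h1μ.ne' h1γ.ne'] at hlog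
  have hlin : μ - (1 + μ) * (γ / (1 + γ)) = (1 + μ) / (1 + γ) - 1 := by
    field_simp
    ring
  rw [fpDual]
  linarith

theorem isGreatest_fpDual {γ : ℝ} (hγ : 0 ≤ γ) :
    IsGreatest {v | ∃ μ : ℝ, 0 ≤ μ ∧ v = fpDual γ μ} (log (1 + γ)) :=
  ⟨⟨γ, hγ, (fpDual_self (by linarith)).symm⟩, by
    rintro v ⟨μ, hμ, rfl⟩
    exact fpDual_le (by linarith) (by linarith)⟩

theorem div_add_eq_div_one_add_div {S T : ℝ} (hT : T ≠ 0) :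
    S / (S + T) = S / T / (1 + S / T) := by
  rw [one_add_div hT, div_div_div_cancel_right₀ hT, add_comm]

theorem fp_lagrangian_dual_identity_general (S I D σ2 γ : ℝ)
    (hγ : 0 < γ)
    (hdef : γ = S / (I + D + σ2)) :
    IsGreatest { v : ℝ | ∃ μ : ℝ, 0 ≤ μ ∧
        v = Real.log (1 + μ) - μ + (1 + μ) * S / (S + I + D + σ2) }
      (Real.log (1 + γ)) ∧
    Real.log (1 + γ) =
      Real.log (1 + γ) - γ + (1 + γ) * S / (S + I + D + σ2) := by
  have hT : I + D + σ2 ≠ 0 := (div_ne_zero_iff.mp (hdef ▸ hγ.ne')).2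
  have hfrac : S / (S + I + D + σ2) = γ / (1 + γ) := by
    rw [hdef, ← div_add_eq_div_one_add_div hT]
    ring_nf
  simp_rw [mul_div_assoc, hfrac]
  exact ⟨isGreatest_fpDual hγ.le, (fpDual_self (by linarith)).symm⟩

/-- Fractional programming (Lagrangian dual) identity: for S, I, D, σ² > 0 and
γ = S/(I + D + σ²) > 0, log(1+γ) is the maximum over μ ≥ 0 of
log(1+μ) − μ + (1+μ)S/(S + I + D + σ²), attained at μ = γ. -/
theorem fp_lagrangian_dual_identity (S I D σ2 γ : ℝ)
    (hS : 0 < S) (hI : 0 < I) (hD : 0 < D) (hσ : 0 < σ2) (hγ : 0 < γ)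
    (hdef : γ = S / (I + D + σ2)) :
    IsGreatest { v : ℝ | ∃ μ : ℝ, 0 ≤ μ ∧
        v = Real.log (1 + μ) - μ + (1 + μ) * S / (S + I + D + σ2) }
      (Real.log (1 + γ)) ∧
    Real.log (1 + γ) =
      Real.log (1 + γ) - γ + (1 + γ) * S / (S + I + D + σ2) :=
  fp_lagrangian_dual_identity_general S I D σ2 γ hγ hdef
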